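/- Monotonicity of the MBS threshold of the suboptimal policy (Theorem 2, Property 2, second part): let V̂_{n,m} : {0,…,N_{n,m}} → ℝ be non-decreasing for every (n,m) ∈ I and set V̂(Q) = Σ_{(n,m)∈I} V̂_{n,m}(Q_{n,m}). Let û* ∈ 𝒰 satisfy û*_0 = m for some content m ∈ M_0. If two partial states Q¹_{−0,−m} and Q²_{−0,−m} (coordinates of I other than (0,m)) satisfy Q¹_{n,m} ≥ Q²_{n,m} for every n ∈ N_m and agree on all other coordinates, then φ̂_{û*}⁻(Q¹_{−0,−m}) ≤ φ̂_{û*}⁻(Q²_{−0,−m}) (in {0,…,N_{0,m}} ∪ {+∞}); i.e., the MBS scheduling threshold φ̂_{û*}⁻(Q_{−0,−m}) is monotonically non-increasing in Q_{n,m} for every n ∈ N_m. -/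

import Mathlib

open Finset

namespace HetNet

/-- The queue index set `I = {(n,m) : 0 ≤ n ≤ N, m ∈ M_n}`. -/
abbrev Idx {N M : ℕ} (cache : Fin (N + 1) → Finset (Fin M)) : Type :=
  {p : Fin (N + 1) × Fin M // p.2 ∈ cache p.1}

/-- The feasible action space `𝒰`: each BS schedules a cached content or idles (`none`),
and the MBS (BS `0`) and the SBSs do not operate concurrently. -/
def Feasible {N M : ℕ} (cache : Fin (N + 1) → Finset (Fin M))
    (u : Fin (N + 1) → Option (Fin M)) : Prop :=
  (∀ n m, u n = some m → m ∈ cache n) ∧ (u 0 ≠ none → ∀ n, n ≠ 0 → u n = none)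

instance {N M : ℕ} (cache : Fin (N + 1) → Finset (Fin M)) :
    DecidablePred (Feasible cache) := by
  intro u; unfold Feasible; infer_instance

instance {N M : ℕ} (cache : Fin (N + 1) → Finset (Fin M)) :
    Nonempty {u : Fin (N + 1) → Option (Fin M) // Feasible cache u} :=
  ⟨⟨fun _ => none, by simp [Feasible]⟩⟩

/-- Queue `(n,m)` is served by action `u`. -/
def Served {N M : ℕ} (u : Fin (N + 1) → Option (Fin M)) (n : Fin (N + 1)) (m : Fin M) : Prop :=
  (n = 0 ∧ u 0 = some m) ∨ (n ≠ 0 ∧ (u 0 = some m ∨ u n = some m))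

instance {N M : ℕ} (u : Fin (N + 1) → Option (Fin M)) (n : Fin (N + 1)) (m : Fin M) :
    Decidable (Served u n m) := by unfold Served; infer_instance

/-- The queue transition map `T(Q,u,A)`. -/
def T {N M : ℕ} {cache : Fin (N + 1) → Finset (Fin M)} (bound : Idx cache → ℕ)
    (Q : Idx cache → ℕ) (u : Fin (N + 1) → Option (Fin M)) (A : Idx cache → ℕ) :
    Idx cache → ℕ := fun i =>
  if Served u i.val.1 i.val.2 then min (A i) (bound i) else min (Q i + A i) (bound i)

/-- The network power cost `p(u) = Σ_n p(n, u_n)` (with `p(n,0) = 0` for an idling BS). -/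
def pcost {N M : ℕ} (p : Fin (N + 1) → Fin M → ℝ) (u : Fin (N + 1) → Option (Fin M)) : ℝ :=
  ∑ n, (u n).elim 0 (p n)

/-- The sum request queue length `d(Q)`. -/
def dcost {N M : ℕ} {cache : Fin (N + 1) → Finset (Fin M)} (Q : Idx cache → ℕ) : ℝ :=
  ∑ i, (Q i : ℝ)

/-- The per-stage cost `g(Q,u) = d(Q) + w·p(u)`. -/
def gcost {N M : ℕ} (p : Fin (N + 1) → Fin M → ℝ) (w : ℝ)
    {cache : Fin (N + 1) → Finset (Fin M)}
    (Q : Idx cache → ℕ) (u : Fin (N + 1) → Option (Fin M)) : ℝ :=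
  dcost Q + w * pcost p u

/-- The state-action cost `J_V(Q,u) = g(Q,u) + Σ_{A∈𝒜} P(A)·V(T(Q,u,A))`. -/
def Jcost {N M : ℕ} (p : Fin (N + 1) → Fin M → ℝ) (w : ℝ)
    {cache : Fin (N + 1) → Finset (Fin M)} (bound : Idx cache → ℕ)
    {ι : Type} [Fintype ι] (P : ι → ℝ) (A : ι → Idx cache → ℕ)
    (V : (Idx cache → ℕ) → ℝ) (Q : Idx cache → ℕ)
    (u : Fin (N + 1) → Option (Fin M)) : ℝ :=
  gcost p w Q u + ∑ a, P a * V (T bound Q u (A a))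

open scoped Classical in
/-- `Φ_u(Q_{−n,−m})`: the set of queue lengths `q ∈ {0,…,N_{n,m}}` at coordinate `i = (n,m)`
such that action `u` dominates every other feasible action at the state obtained from `Q`
by replacing its `(n,m)`-coordinate with `q`.  Its `Finset.max` (valued in `WithBot ℕ`,
`⊥` = −∞) is `φ_u⁺(Q_{−n,−m})`, and its `Finset.min` (valued in `WithTop ℕ`, `⊤` = +∞)
is `φ_u⁻(Q_{−n,−m})`. -/
noncomputable def Phi {N M : ℕ} (p : Fin (N + 1) → Fin M → ℝ) (w : ℝ)
    {cache : Fin (N + 1) → Finset (Fin M)} (bound : Idx cache → ℕ)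
    {ι : Type} [Fintype ι] (P : ι → ℝ) (A : ι → Idx cache → ℕ)
    (V : (Idx cache → ℕ) → ℝ) (u : Fin (N + 1) → Option (Fin M))
    (i : Idx cache) (Q : Idx cache → ℕ) : Finset ℕ :=
  (Finset.range (bound i + 1)).filter fun q =>
    ∀ v, Feasible cache v → v ≠ u →
      Jcost p w bound P A V (Function.update Q i q) u -
        Jcost p w bound P A V (Function.update Q i q) v ≤ 0

/-! Since `û*_0 = m`, every queue `(n,m)` is served by `û*`, so after `û*` its length does not
depend on the state, while after any competitor `v` it is non-decreasing in the state. With `V̂`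
separable and non-decreasing, `Δ̂_{û*,v}` therefore can only decrease from `Q²` to `Q¹` (the costs
`d` and `p` cancel in the difference), whence `Φ̂_{û*}(Q²) ⊆ Φ̂_{û*}(Q¹)` and the minima compare. -/

section Transition

variable {N M : ℕ} {cache : Fin (N + 1) → Finset (Fin M)} (bound : Idx cache → ℕ)
  (A : Idx cache → ℕ) (j : Idx cache)

theorem T_le_bound (Q : Idx cache → ℕ) (v : Fin (N + 1) → Option (Fin M)) :
    T bound Q v A j ≤ bound j := by
  unfold T; split_ifs <;> exact min_le_right _ _

theorem T_eq_of_served {u : Fin (N + 1) → Option (Fin M)} (hu : Served u j.val.1 j.val.2)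
    (Q Q' : Idx cache → ℕ) : T bound Q u A j = T bound Q' u A j := by
  simp only [T, if_pos hu]

theorem T_mono {Q Q' : Idx cache → ℕ} (h : Q' j ≤ Q j) (v : Fin (N + 1) → Option (Fin M)) :
    T bound Q' v A j ≤ T bound Q v A j := by
  unfold T; split_ifs
  · exact le_rfl
  · exact min_le_min_right _ (Nat.add_le_add_right h _)

theorem T_congr {Q Q' : Idx cache → ℕ} (h : Q j = Q' j) (v : Fin (N + 1) → Option (Fin M)) :
    T bound Q v A j = T bound Q' v A j := by
  simp only [T, h]

theorem sub_T_le_sub_T_of_served {f : ℕ → ℝ} (hf : MonotoneOn f (Set.Iic (bound j)))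
    {u : Fin (N + 1) → Option (Fin M)} (hu : Served u j.val.1 j.val.2)
    {Q₁ Q₂ : Idx cache → ℕ} (h : Q₂ j ≤ Q₁ j) (v : Fin (N + 1) → Option (Fin M)) :
    f (T bound Q₁ u A j) - f (T bound Q₁ v A j) ≤
      f (T bound Q₂ u A j) - f (T bound Q₂ v A j) := by
  have hv : f (T bound Q₂ v A j) ≤ f (T bound Q₁ v A j) :=
    hf (T_le_bound bound A j Q₂ v) (T_le_bound bound A j Q₁ v) (T_mono bound A j h v)
  rw [T_eq_of_served bound A j hu Q₁ Q₂]
  linarith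

end Transition

theorem served_of_apply_zero_eq_some {N M : ℕ} {u : Fin (N + 1) → Option (Fin M)} {m : Fin M}
    (hu : u 0 = some m) (n : Fin (N + 1)) : Served u n m := by
  by_cases hn : n = 0
  · exact Or.inl ⟨hn, hu⟩
  · exact Or.inr ⟨hn, Or.inl hu⟩

section Separable

variable {N M : ℕ} {cache : Fin (N + 1) → Finset (Fin M)} (bound : Idx cache → ℕ)
  (p : Fin (N + 1) → Fin M → ℝ) (w : ℝ) {ι : Type} [Fintype ι] {P : ι → ℝ}
  (A : ι → Idx cache → ℕ) {Vv : (i : Idx cache) → ℕ → ℝ}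

theorem Jcost_sub_le_of_served_dominates (hP : ∀ a, 0 ≤ P a)
    (hVv : ∀ i, MonotoneOn (Vv i) (Set.Iic (bound i)))
    {u : Fin (N + 1) → Option (Fin M)} {Q₁ Q₂ : Idx cache → ℕ}
    (hQ : ∀ j : Idx cache, Q₁ j = Q₂ j ∨ (Served u j.val.1 j.val.2 ∧ Q₂ j ≤ Q₁ j))
    (v : Fin (N + 1) → Option (Fin M)) :
    Jcost p w bound P A (fun Q => ∑ j, Vv j (Q j)) Q₁ u -
        Jcost p w bound P A (fun Q => ∑ j, Vv j (Q j)) Q₁ v ≤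
      Jcost p w bound P A (fun Q => ∑ j, Vv j (Q j)) Q₂ u -
        Jcost p w bound P A (fun Q => ∑ j, Vv j (Q j)) Q₂ v := by
  have hcoord : ∀ a j, Vv j (T bound Q₁ u (A a) j) - Vv j (T bound Q₁ v (A a) j) ≤
      Vv j (T bound Q₂ u (A a) j) - Vv j (T bound Q₂ v (A a) j) := fun a j => by
    rcases hQ j with heq | ⟨hu, hle⟩
    · rw [T_congr bound (A a) j heq u, T_congr bound (A a) j heq v]
    · exact sub_T_le_sub_T_of_served bound (A a) j (hVv j) hu hle v
  have hexp : ∑ a, P a * ∑ j, Vv j (T bound Q₁ u (A a) j) -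
        ∑ a, P a * ∑ j, Vv j (T bound Q₁ v (A a) j) ≤
      ∑ a, P a * ∑ j, Vv j (T bound Q₂ u (A a) j) -
        ∑ a, P a * ∑ j, Vv j (T bound Q₂ v (A a) j) := by
    simp only [← Finset.sum_sub_distrib, ← mul_sub]
    exact Finset.sum_le_sum fun a _ => mul_le_mul_of_nonneg_left
      (Finset.sum_le_sum fun j _ => hcoord a j) (hP a)
  simp only [Jcost, gcost]
  linarith

theorem Phi_subset_of_served_dominates (hP : ∀ a, 0 ≤ P a)
    (hVv : ∀ i, MonotoneOn (Vv i) (Set.Iic (bound i)))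
    {u : Fin (N + 1) → Option (Fin M)} (i : Idx cache) {Q₁ Q₂ : Idx cache → ℕ}
    (hQ : ∀ q, ∀ j : Idx cache, Function.update Q₁ i q j = Function.update Q₂ i q j ∨
      (Served u j.val.1 j.val.2 ∧ Function.update Q₂ i q j ≤ Function.update Q₁ i q j)) :
    Phi p w bound P A (fun Q => ∑ j, Vv j (Q j)) u i Q₂ ⊆
      Phi p w bound P A (fun Q => ∑ j, Vv j (Q j)) u i Q₁ := by
  intro q hq
  simp only [Phi, Finset.mem_filter] at hq ⊢
  exact ⟨hq.1, fun v hv hvu =>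
    (Jcost_sub_le_of_served_dominates bound p w A hP hVv (hQ q) v).trans (hq.2 v hv hvu)⟩

end Separable

theorem suboptimal_MBS_threshold_monotone_general {N M : ℕ} (cache : Fin (N + 1) → Finset (Fin M))
    (hcache0 : ∀ m : Fin M, m ∈ cache 0)
    (bound : Idx cache → ℕ)
    (p : Fin (N + 1) → Fin M → ℝ)
    (w : ℝ)
    {ι : Type} [Fintype ι] (P : ι → ℝ) (A : ι → Idx cache → ℕ)
    (hP : ∀ a, 0 ≤ P a)
    (Vv : (i : Idx cache) → ℕ → ℝ)
    (hVv : ∀ i : Idx cache, ∀ q q' : ℕ, q ≤ q' → q' ≤ bound i → Vv i q ≤ Vv i q')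
    (ustar : Fin (N + 1) → Option (Fin M))
    (m : Fin M) (hu0 : ustar 0 = some m)
    (Q₁ Q₂ : Idx cache → ℕ)
    (hge : ∀ i : Idx cache, i.val.1 ≠ 0 → i.val.2 = m → Q₂ i ≤ Q₁ i)
    (heq : ∀ i : Idx cache, i.val ≠ ((0 : Fin (N + 1)), m) →
      ¬(i.val.1 ≠ 0 ∧ i.val.2 = m) → Q₁ i = Q₂ i) :
    (Phi p w bound P A (fun Q' => ∑ j, Vv j (Q' j)) ustar
        ⟨((0 : Fin (N + 1)), m), hcache0 m⟩ Q₁).min ≤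
      (Phi p w bound P A (fun Q' => ∑ j, Vv j (Q' j)) ustar
        ⟨((0 : Fin (N + 1)), m), hcache0 m⟩ Q₂).min := by
  set i₀ : Idx cache := ⟨((0 : Fin (N + 1)), m), hcache0 m⟩
  refine Finset.min_mono (Phi_subset_of_served_dominates bound p w A hP
    (fun i _ ha _ hb hab => hVv i _ _ hab hb) i₀ fun q j => ?_)
  by_cases hj₀ : j = i₀
  · subst hj₀
    simp only [Function.update_self, true_or]
  simp only [Function.update_of_ne hj₀]
  by_cases hjm : j.val.1 ≠ 0 ∧ j.val.2 = m
  · exact Or.inr ⟨hjm.2 ▸ served_of_apply_zero_eq_some hu0 _, hge j hjm.1 hjm.2⟩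
  · exact Or.inl (heq j (fun h => hj₀ (Subtype.ext h)) hjm)

/-- Theorem 2, Property 2, second part: monotonicity of the MBS threshold
of the suboptimal policy: with the additive separable approximation
`V̂(Q) = Σ V̂_{n,m}(Q_{n,m})` built from non-decreasing per-queue value functions, if
`û* ∈ 𝒰` has `û*_0 = m ∈ M_0` and the partial states `Q¹_{−0,−m}, Q²_{−0,−m}` satisfy
`Q¹_{n,m} ≥ Q²_{n,m}` for every `n ∈ N_m` and agree on all other coordinates, then
`φ̂_{û*}⁻(Q¹_{−0,−m}) ≤ φ̂_{û*}⁻(Q²_{−0,−m})` in `{0,…,N_{0,m}} ∪ {+∞}`. -/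
theorem suboptimal_MBS_threshold_monotone {N M : ℕ} (cache : Fin (N + 1) → Finset (Fin M))
    (hcache0 : ∀ m : Fin M, m ∈ cache 0)
    (bound : Idx cache → ℕ)
    (p : Fin (N + 1) → Fin M → ℝ) (hp : ∀ n m, 0 ≤ p n m)
    (w : ℝ) (hw : 0 ≤ w)
    {ι : Type} [Fintype ι] (P : ι → ℝ) (A : ι → Idx cache → ℕ)
    (hP : ∀ a, 0 ≤ P a) (hPsum : ∑ a, P a = 1)
    (Vv : (i : Idx cache) → ℕ → ℝ)
    (hVv : ∀ i : Idx cache, ∀ q q' : ℕ, q ≤ q' → q' ≤ bound i → Vv i q ≤ Vv i q')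
    (ustar : Fin (N + 1) → Option (Fin M)) (hustar : Feasible cache ustar)
    (m : Fin M) (hu0 : ustar 0 = some m)
    (Q₁ Q₂ : Idx cache → ℕ)
    (hQ₁ : ∀ i, Q₁ i ≤ bound i) (hQ₂ : ∀ i, Q₂ i ≤ bound i)
    (hge : ∀ i : Idx cache, i.val.1 ≠ 0 → i.val.2 = m → Q₂ i ≤ Q₁ i)
    (heq : ∀ i : Idx cache, i.val ≠ ((0 : Fin (N + 1)), m) →
      ¬(i.val.1 ≠ 0 ∧ i.val.2 = m) → Q₁ i = Q₂ i) :
    (Phi p w bound P A (fun Q' => ∑ j, Vv j (Q' j)) ustar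
        ⟨((0 : Fin (N + 1)), m), hcache0 m⟩ Q₁).min ≤
      (Phi p w bound P A (fun Q' => ∑ j, Vv j (Q' j)) ustar
        ⟨((0 : Fin (N + 1)), m), hcache0 m⟩ Q₂).min :=
  suboptimal_MBS_threshold_monotone_general cache hcache0 bound p w P A hP Vv hVv ustar m hu0 Q₁ Q₂
    hge heq

end HetNet
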